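/- For d ≥ 1, z ≥ 0 and 0 < ε ≤ 1, define I_d(ε) = ∫_{[0,1]^d} (∏_{ℓ=1}^d s_ℓ)^z · 1{∏_{ℓ=1}^d s_ℓ ≤ ε} ds. Then I_d(ε) = O(ε^{z+1} |log ε|^{d-1}) as ε ↓ 0; more precisely, there is a constant C (depending on d and z) such that I_d(ε) ≤ C ε^{z+1} (1 + |log ε|)^{d-1} for all 0 < ε ≤ 1. -/

import Mathlib

open MeasureTheory Real Set

variable {z : ℝ}

lemma meas_aux (hz : 0 ≤ z) (d : ℕ) (ε : ℝ) :
    Measurable (fun s : Fin d → ℝ => if (∏ ℓ, s ℓ) ≤ ε then (∏ ℓ, s ℓ) ^ z else 0) := by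
  have hp : Measurable fun s : Fin d → ℝ => ∏ ℓ, s ℓ :=
    Finset.measurable_prod _ (fun i _ => measurable_pi_apply i)
  exact Measurable.ite (measurableSet_le hp measurable_const)
    ((Real.continuous_rpow_const hz).measurable.comp hp) measurable_const

lemma vol_cube (d : ℕ) : volume (Icc (0 : Fin d → ℝ) 1) = 1 := by
  simp [Real.volume_Icc_pi]

lemma intOn_aux (hz : 0 ≤ z) (d : ℕ) (ε : ℝ) :
    IntegrableOn (fun s : Fin d → ℝ => if (∏ ℓ, s ℓ) ≤ ε then (∏ ℓ, s ℓ) ^ z else 0)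
      (Icc 0 1) volume := by
  refine Integrable.mono' (g := fun _ => (1:ℝ))
    (integrableOn_const (by rw [vol_cube]; exact ENNReal.one_ne_top))
    ((meas_aux hz d ε).aestronglyMeasurable) ?_
  refine (ae_restrict_iff' measurableSet_Icc).2 (Filter.Eventually.of_forall fun s hs => ?_)
  have h0 : (0:ℝ) ≤ ∏ ℓ, s ℓ := Finset.prod_nonneg fun i _ => (hs.1 i)
  have h1 : (∏ ℓ, s ℓ) ≤ 1 := Finset.prod_le_one (fun i _ => hs.1 i) (fun i _ => hs.2 i)
  split_ifs
  · rw [Real.norm_eq_abs, abs_of_nonneg (Real.rpow_nonneg h0 z)]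
    exact Real.rpow_le_one h0 h1 hz
  · simp

lemma fubini_step (hz : 0 ≤ z) (d : ℕ) (ε : ℝ) :
    (∫ s in Icc (0 : Fin (d+1) → ℝ) 1,
        if (∏ ℓ, s ℓ) ≤ ε then (∏ ℓ, s ℓ) ^ z else 0)
    = ∫ t in Icc (0:ℝ) 1, ∫ y in Icc (0 : Fin d → ℝ) 1,
        (if t * ∏ ℓ, y ℓ ≤ ε then (t * ∏ ℓ, y ℓ) ^ z else 0) := by
  have hmp := (measurePreserving_piFinSuccAbove (fun _ : Fin (d+1) => (volume : Measure ℝ)) 0).symm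
  set e := (MeasurableEquiv.piFinSuccAbove (fun _ : Fin (d+1) => ℝ) 0) with he
  have hemb : MeasurableEmbedding ⇑e.symm := e.symm.measurableEmbedding
  have himg : ⇑e.symm '' ((Icc (0:ℝ) 1) ×ˢ (Icc (0 : Fin d → ℝ) 1)) = Icc 0 1 := by
    have h1 : ⇑e.symm '' ((Icc (0:ℝ) 1) ×ˢ (Icc (0 : Fin d → ℝ) 1)) = ⇑e ⁻¹' _ :=
      Equiv.image_eq_preimage_symm e.symm.toEquiv _
    rw [h1]
    ext s
    simp only [e, Set.mem_preimage, Set.mem_prod, Set.mem_Icc,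
      MeasurableEquiv.piFinSuccAbove_apply, Pi.le_def, Fin.forall_fin_succ, Fin.zero_succAbove,
      Pi.zero_apply, Pi.one_apply]
    tauto
  have hcomp : ∀ p : ℝ × (Fin d → ℝ),
      (if (∏ ℓ, (e.symm p) ℓ) ≤ ε then (∏ ℓ, (e.symm p) ℓ) ^ z else 0)
      = (if p.1 * ∏ ℓ, p.2 ℓ ≤ ε then (p.1 * ∏ ℓ, p.2 ℓ) ^ z else 0) := by
    intro p
    have : (∏ ℓ, (e.symm p) ℓ) = p.1 * ∏ ℓ, p.2 ℓ := by
      simp only [e, MeasurableEquiv.piFinSuccAbove_symm_apply, Fin.insertNthEquiv_apply,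
        Fin.insertNth_zero, Fin.prod_univ_succ, Fin.cons_zero, Fin.cons_succ,
        Fin.zero_succAbove, cast_eq]
    rw [this]
  calc (∫ s in Icc (0 : Fin (d+1) → ℝ) 1,
        if (∏ ℓ, s ℓ) ≤ ε then (∏ ℓ, s ℓ) ^ z else 0)
      = ∫ p in (Icc (0:ℝ) 1) ×ˢ (Icc (0 : Fin d → ℝ) 1),
          (if (∏ ℓ, (e.symm p) ℓ) ≤ ε then (∏ ℓ, (e.symm p) ℓ) ^ z else 0)
          ∂((volume : Measure ℝ).prod (Measure.pi fun _ => (volume : Measure ℝ))) := by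
        rw [← himg, volume_pi, hmp.setIntegral_image_emb hemb]
    _ = ∫ p in (Icc (0:ℝ) 1) ×ˢ (Icc (0 : Fin d → ℝ) 1),
          (if p.1 * ∏ ℓ, p.2 ℓ ≤ ε then (p.1 * ∏ ℓ, p.2 ℓ) ^ z else 0)
          ∂((volume : Measure ℝ).prod (volume : Measure (Fin d → ℝ))) := by
        rw [← volume_pi]; exact setIntegral_congr_fun (by measurability) (fun p _ => hcomp p)
    _ = _ := by
        refine setIntegral_prod _ ?_
        have : IntegrableOn (fun p : ℝ × (Fin d → ℝ) =>
            (if (∏ ℓ, (e.symm p) ℓ) ≤ ε then (∏ ℓ, (e.symm p) ℓ) ^ z else 0))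
            ((Icc (0:ℝ) 1) ×ˢ (Icc (0 : Fin d → ℝ) 1))
            ((volume : Measure ℝ).prod (volume : Measure (Fin d → ℝ))) := by
          have h2 := (hmp.restrict_image_emb hemb
            ((Icc (0:ℝ) 1) ×ˢ (Icc (0 : Fin d → ℝ) 1)))
          rw [himg] at h2
          have h3 := (h2.integrable_comp_emb hemb
            (g := fun s : Fin (d+1) → ℝ =>
              if (∏ ℓ, s ℓ) ≤ ε then (∏ ℓ, s ℓ) ^ z else 0)).2
          rw [volume_pi]
          exact h3 (by rw [← volume_pi]; exact intOn_aux hz (d+1) ε)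
        refine this.congr_fun (fun p _ => hcomp p) (by measurability)
variable {z : ℝ}

lemma int_pow_Icc (hz : 0 ≤ z) {ε : ℝ} (hε0 : 0 ≤ ε) :
    ∫ t in Icc (0:ℝ) ε, t ^ z = ε ^ (z+1) / (z+1) := by
  rw [integral_Icc_eq_integral_Ioc, ← intervalIntegral.integral_of_le hε0,
    integral_rpow (Or.inl (by linarith)), Real.zero_rpow (by positivity), sub_zero]

lemma int_log_pow (d : ℕ) (hd : 1 ≤ d) {ε : ℝ} (hε0 : 0 < ε) (hε1 : ε ≤ 1) :
    ∫ t in Ioc ε 1, t⁻¹ * (1 + Real.log t - Real.log ε) ^ (d-1)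
      ≤ (1 - Real.log ε) ^ d / d := by
  have hFTC : ∫ t in ε..1, t⁻¹ * (1 + Real.log t - Real.log ε) ^ (d-1)
      = (1 - Real.log ε) ^ d / d - 1 / d := by
    have hderiv : ∀ t ∈ Set.uIcc ε 1, HasDerivAt
        (fun t => (1 + Real.log t - Real.log ε) ^ d / d)
        (t⁻¹ * (1 + Real.log t - Real.log ε) ^ (d-1)) t := by
      intro t ht
      rw [Set.uIcc_of_le hε1] at ht
      have ht0 : t ≠ 0 := (lt_of_lt_of_le hε0 ht.1).ne'
      have h1 : HasDerivAt (fun t => 1 + Real.log t - Real.log ε) t⁻¹ t := by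
        simpa using ((Real.hasDerivAt_log ht0).const_add 1).sub_const (Real.log ε)
      have h2 := (h1.pow d).div_const (d:ℝ)
      have hd0 : (d:ℝ) ≠ 0 := Nat.cast_ne_zero.2 (by omega)
      exact h2.congr_deriv (by rw [div_eq_iff hd0]; ring)
    have hcont : ContinuousOn (fun t : ℝ => t⁻¹ * (1 + Real.log t - Real.log ε) ^ (d-1))
        (Set.uIcc ε 1) := by
      rw [Set.uIcc_of_le hε1]
      intro t ht
      have ht0 : t ≠ 0 := (lt_of_lt_of_le hε0 ht.1).ne'
      exact ((continuousAt_inv₀ ht0).mul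
        (((continuousAt_const.add (Real.continuousAt_log ht0)).sub continuousAt_const).pow
          (d-1))).continuousWithinAt
    rw [intervalIntegral.integral_eq_sub_of_hasDerivAt hderiv
      (hcont.intervalIntegrable)]
    simp [Real.log_one]
  rw [← intervalIntegral.integral_of_le hε1] at *
  rw [hFTC]
  have : (0:ℝ) < d := by exact_mod_cast hd
  have h1 : (0:ℝ) ≤ 1 / d := by positivity
  linarith
variable {z : ℝ}

-- integrability of the product-space integrand
lemma intOn_prod (hz : 0 ≤ z) (d : ℕ) (ε : ℝ) :
    IntegrableOn (fun p : ℝ × (Fin d → ℝ) =>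
        if p.1 * ∏ ℓ, p.2 ℓ ≤ ε then (p.1 * ∏ ℓ, p.2 ℓ) ^ z else 0)
      ((Icc (0:ℝ) 1) ×ˢ (Icc (0 : Fin d → ℝ) 1))
      ((volume : Measure ℝ).prod (volume : Measure (Fin d → ℝ))) := by
  have hp : Measurable fun p : ℝ × (Fin d → ℝ) => p.1 * ∏ ℓ, p.2 ℓ :=
    measurable_fst.mul ((Finset.measurable_prod _
      (fun i _ => measurable_pi_apply i)).comp measurable_snd)
  have hmeas : Measurable (fun p : ℝ × (Fin d → ℝ) =>
      if p.1 * ∏ ℓ, p.2 ℓ ≤ ε then (p.1 * ∏ ℓ, p.2 ℓ) ^ z else 0) :=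
    Measurable.ite (measurableSet_le hp measurable_const)
      ((Real.continuous_rpow_const hz).measurable.comp hp) measurable_const
  refine Integrable.mono' (g := fun _ => (1:ℝ)) ?_ hmeas.aestronglyMeasurable ?_
  · refine integrableOn_const ?_
    rw [Measure.prod_prod]
    simp [Real.volume_Icc_pi, Real.volume_Icc]
  · refine (ae_restrict_iff' (measurableSet_Icc.prod measurableSet_Icc)).2
      (Filter.Eventually.of_forall fun p hp' => ?_)
    obtain ⟨⟨ht0, ht1⟩, hy⟩ := hp'
    have h0 : (0:ℝ) ≤ ∏ ℓ, p.2 ℓ := Finset.prod_nonneg fun i _ => (hy.1 i)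
    have h1 : (∏ ℓ, p.2 ℓ) ≤ 1 := Finset.prod_le_one (fun i _ => hy.1 i) (fun i _ => hy.2 i)
    have hu0 : (0:ℝ) ≤ p.1 * ∏ ℓ, p.2 ℓ := mul_nonneg ht0 h0
    have hu1 : p.1 * ∏ ℓ, p.2 ℓ ≤ 1 := by nlinarith
    split_ifs
    · rw [Real.norm_eq_abs, abs_of_nonneg (Real.rpow_nonneg hu0 z)]
      exact Real.rpow_le_one hu0 hu1 hz
    · simp

lemma intOn_h (hz : 0 ≤ z) (d : ℕ) (ε : ℝ) :
    IntegrableOn (fun t : ℝ => ∫ y in Icc (0 : Fin d → ℝ) 1,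
        (if t * ∏ ℓ, y ℓ ≤ ε then (t * ∏ ℓ, y ℓ) ^ z else 0)) (Icc 0 1) volume := by
  have h := intOn_prod hz d ε
  rw [IntegrableOn, ← Measure.prod_restrict] at h
  exact h.integral_prod_left

-- inner integrand integrability (fixed t)
lemma intOn_inner (hz : 0 ≤ z) (d : ℕ) (ε t : ℝ) (ht0 : 0 ≤ t) (ht1 : t ≤ 1) :
    IntegrableOn (fun y : Fin d → ℝ =>
        if t * ∏ ℓ, y ℓ ≤ ε then (t * ∏ ℓ, y ℓ) ^ z else 0) (Icc 0 1) volume := by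
  have hp : Measurable fun y : Fin d → ℝ => t * ∏ ℓ, y ℓ :=
    measurable_const.mul (Finset.measurable_prod _ (fun i _ => measurable_pi_apply i))
  have hmeas : Measurable (fun y : Fin d → ℝ =>
      if t * ∏ ℓ, y ℓ ≤ ε then (t * ∏ ℓ, y ℓ) ^ z else 0) :=
    Measurable.ite (measurableSet_le hp measurable_const)
      ((Real.continuous_rpow_const hz).measurable.comp hp) measurable_const
  refine Integrable.mono' (g := fun _ => (1:ℝ)) ?_ hmeas.aestronglyMeasurable ?_
  · refine integrableOn_const ?_
    simp [Real.volume_Icc_pi]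
  · refine (ae_restrict_iff' measurableSet_Icc).2 (Filter.Eventually.of_forall fun y hy => ?_)
    have h0 : (0:ℝ) ≤ ∏ ℓ, y ℓ := Finset.prod_nonneg fun i _ => (hy.1 i)
    have h1 : (∏ ℓ, y ℓ) ≤ 1 := Finset.prod_le_one (fun i _ => hy.1 i) (fun i _ => hy.2 i)
    have hu0 : (0:ℝ) ≤ t * ∏ ℓ, y ℓ := mul_nonneg ht0 h0
    have hu1 : t * ∏ ℓ, y ℓ ≤ 1 := by nlinarith
    split_ifs
    · rw [Real.norm_eq_abs, abs_of_nonneg (Real.rpow_nonneg hu0 z)]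
      exact Real.rpow_le_one hu0 hu1 hz
    · simp

lemma inner_le_pow (hz : 0 ≤ z) (d : ℕ) (ε t : ℝ) (ht0 : 0 ≤ t) (ht1 : t ≤ 1) :
    (∫ y in Icc (0 : Fin d → ℝ) 1,
        (if t * ∏ ℓ, y ℓ ≤ ε then (t * ∏ ℓ, y ℓ) ^ z else 0)) ≤ t ^ z := by
  have hvol : volume (Icc (0 : Fin d → ℝ) 1) = 1 := by simp [Real.volume_Icc_pi]
  have hb : (∫ y in Icc (0 : Fin d → ℝ) 1, (t:ℝ) ^ z) = t ^ z := by
    rw [setIntegral_const, measureReal_def, hvol]; simp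
  rw [← hb]
  refine setIntegral_mono_on (intOn_inner hz d ε t ht0 ht1)
    (integrableOn_const (by rw [hvol]; exact ENNReal.one_ne_top))
    measurableSet_Icc (fun y hy => ?_)
  have h0 : (0:ℝ) ≤ ∏ ℓ, y ℓ := Finset.prod_nonneg fun i _ => (hy.1 i)
  have h1 : (∏ ℓ, y ℓ) ≤ 1 := Finset.prod_le_one (fun i _ => hy.1 i) (fun i _ => hy.2 i)
  split_ifs
  · exact Real.rpow_le_rpow (mul_nonneg ht0 h0) (by nlinarith) hz
  · exact Real.rpow_nonneg ht0 z

lemma inner_eq (hz : 0 ≤ z) (d : ℕ) (ε t : ℝ) (ht0 : 0 < t) :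
    (∫ y in Icc (0 : Fin d → ℝ) 1,
        (if t * ∏ ℓ, y ℓ ≤ ε then (t * ∏ ℓ, y ℓ) ^ z else 0))
    = t ^ z * ∫ y in Icc (0 : Fin d → ℝ) 1,
        (if (∏ ℓ, y ℓ) ≤ ε / t then (∏ ℓ, y ℓ) ^ z else 0) := by
  rw [← MeasureTheory.integral_const_mul]
  refine setIntegral_congr_fun measurableSet_Icc (fun y hy => ?_)
  have h0 : (0:ℝ) ≤ ∏ ℓ, y ℓ := Finset.prod_nonneg fun i _ => (hy.1 i)
  have hiff : t * ∏ ℓ, y ℓ ≤ ε ↔ (∏ ℓ, y ℓ) ≤ ε / t := by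
    rw [le_div_iff₀ ht0, mul_comm]
  by_cases h : t * ∏ ℓ, y ℓ ≤ ε
  · rw [if_pos h, if_pos (hiff.1 h), Real.mul_rpow ht0.le h0]
  · rw [if_neg h, if_neg (fun hc => h (hiff.2 hc)), mul_zero]

lemma oneDim_bound (hz : 0 ≤ z) {ε : ℝ} (hε0 : 0 < ε) (hε1 : ε ≤ 1) :
    (∫ t in Icc (0:ℝ) 1, if t ≤ ε then t ^ z else 0) ≤ ε ^ (z+1) / (z+1) := by
  have hint1 : IntegrableOn (fun t:ℝ => if t ≤ ε then t ^ z else 0) (Icc 0 1) volume := by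
    have hmeas : Measurable (fun t:ℝ => if t ≤ ε then t ^ z else 0) :=
      Measurable.ite (measurableSet_le measurable_id measurable_const)
        (Real.continuous_rpow_const hz).measurable measurable_const
    refine Integrable.mono' (g := fun _ => (1:ℝ))
      (integrableOn_const (by simp [Real.volume_Icc])) hmeas.aestronglyMeasurable ?_
    refine (ae_restrict_iff' measurableSet_Icc).2 (.of_forall fun t ht => ?_)
    split_ifs
    · rw [Real.norm_eq_abs, abs_of_nonneg (Real.rpow_nonneg ht.1 z)]
      exact Real.rpow_le_one ht.1 ht.2 hz
    · simp
  have hind : IntegrableOn ((Icc (0:ℝ) ε).indicator fun t => t ^ z) (Icc 0 1) volume :=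
    ((integrable_indicator_iff measurableSet_Icc).2
      ((Real.continuous_rpow_const hz).integrableOn_Icc)).integrableOn
  calc (∫ t in Icc (0:ℝ) 1, if t ≤ ε then t ^ z else 0)
      ≤ ∫ t in Icc (0:ℝ) 1, (Icc (0:ℝ) ε).indicator (fun t => t ^ z) t := by
        refine setIntegral_mono_on hint1 hind measurableSet_Icc (fun t ht => ?_)
        split_ifs with h
        · rw [Set.indicator_of_mem (Set.mem_Icc.2 ⟨(Set.mem_Icc.1 ht).1, h⟩)]
        · exact Set.indicator_apply_nonneg (fun hu => Real.rpow_nonneg hu.1 z)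
    _ = ∫ t in Icc (0:ℝ) 1 ∩ Icc (0:ℝ) ε, t ^ z := setIntegral_indicator measurableSet_Icc
    _ = ∫ t in Icc (0:ℝ) ε, t ^ z := by
        rw [Set.inter_eq_self_of_subset_right (Set.Icc_subset_Icc le_rfl hε1)]
    _ = ε ^ (z+1) / (z+1) := int_pow_Icc hz hε0.le

theorem stmt0 (d : ℕ) (hd : 1 ≤ d) (z : ℝ) (hz : 0 ≤ z) :
    ∃ C > 0, ∀ ε : ℝ, 0 < ε → ε ≤ 1 →
      (∫ s in Set.Icc (0 : Fin d → ℝ) 1,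
          if (∏ ℓ, s ℓ) ≤ ε then (∏ ℓ, s ℓ) ^ z else 0) ≤
        C * ε ^ (z + 1) * (1 + |Real.log ε|) ^ (d - 1) := by
  induction d, hd using Nat.le_induction with
  | base =>
    refine ⟨(z+1)⁻¹, by positivity, fun ε hε0 hε1 => ?_⟩
    have hred : ∀ t : ℝ, (∫ y in Icc (0 : Fin 0 → ℝ) 1,
        (if t * ∏ ℓ, y ℓ ≤ ε then (t * ∏ ℓ, y ℓ) ^ z else 0))
        = (if t ≤ ε then t ^ z else 0) := by
      intro t
      have hprod : ∀ y : Fin 0 → ℝ, (∏ ℓ, y ℓ) = 1 := fun y => by simp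
      simp only [hprod, mul_one, setIntegral_const, measureReal_def, vol_cube 0]
      simp
    rw [fubini_step hz 0 ε]
    simp only [hred]
    calc (∫ t in Icc (0:ℝ) 1, if t ≤ ε then t ^ z else 0)
        ≤ ε ^ (z+1) / (z+1) := oneDim_bound hz hε0 hε1
      _ = (z+1)⁻¹ * ε ^ (z+1) * (1 + |Real.log ε|) ^ (1-1) := by
          simp [div_eq_inv_mul]
  | succ d hd IH =>
    obtain ⟨C, hC, hIH⟩ := IH
    have hdpos : (0:ℝ) < d := by exact_mod_cast hd
    refine ⟨(z+1)⁻¹ + C/d, by positivity, fun ε hε0 hε1 => ?_⟩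
    rw [fubini_step hz d ε]
    set h : ℝ → ℝ := fun t => ∫ y in Icc (0 : Fin d → ℝ) 1,
      (if t * ∏ ℓ, y ℓ ≤ ε then (t * ∏ ℓ, y ℓ) ^ z else 0) with hh
    have hIntOn : IntegrableOn h (Icc 0 1) volume := intOn_h hz d ε
    have hsplit : ∫ t in Icc (0:ℝ) 1, h t
        = (∫ t in Icc (0:ℝ) ε, h t) + ∫ t in Ioc ε 1, h t := by
      rw [← Set.Icc_union_Ioc_eq_Icc hε0.le hε1]
      exact setIntegral_union (Set.disjoint_left.2 (fun x hx hx2 => absurd hx.2 (not_le.2 hx2.1))) measurableSet_Ioc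
        (hIntOn.mono_set (Set.Icc_subset_Icc le_rfl hε1))
        (hIntOn.mono_set (Set.Ioc_subset_Icc_self.trans (Set.Icc_subset_Icc hε0.le le_rfl)))
    have piece1 : (∫ t in Icc (0:ℝ) ε, h t) ≤ ε ^ (z+1) / (z+1) := by
      calc (∫ t in Icc (0:ℝ) ε, h t) ≤ ∫ t in Icc (0:ℝ) ε, t ^ z := by
            refine setIntegral_mono_on
              (hIntOn.mono_set (Set.Icc_subset_Icc le_rfl hε1))
              ((Real.continuous_rpow_const hz).integrableOn_Icc)
              measurableSet_Icc (fun t ht => ?_)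
            exact inner_le_pow hz d ε t ht.1 (le_trans ht.2 hε1)
        _ = ε ^ (z+1) / (z+1) := int_pow_Icc hz hε0.le
    have piece2 : (∫ t in Ioc ε 1, h t)
        ≤ C * ε ^ (z+1) * ((1 - Real.log ε) ^ d / d) := by
      have hgint : IntegrableOn (fun t : ℝ =>
          C * ε ^ (z+1) * (t⁻¹ * (1 + Real.log t - Real.log ε) ^ (d-1))) (Ioc ε 1) volume := by
        refine IntegrableOn.mono_set ?_ Set.Ioc_subset_Icc_self
        refine ContinuousOn.integrableOn_Icc ?_
        refine continuousOn_const.mul (ContinuousOn.mul ?_ ?_)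
        · intro t ht
          exact (continuousAt_inv₀ (lt_of_lt_of_le hε0 ht.1).ne').continuousWithinAt
        · intro t ht
          exact (((continuousAt_const.add
            (Real.continuousAt_log (lt_of_lt_of_le hε0 ht.1).ne')).sub
            continuousAt_const).pow (d-1)).continuousWithinAt
      calc (∫ t in Ioc ε 1, h t)
          ≤ ∫ t in Ioc ε 1,
              C * ε ^ (z+1) * (t⁻¹ * (1 + Real.log t - Real.log ε) ^ (d-1)) := by
            refine setIntegral_mono_on
              (hIntOn.mono_set (Set.Ioc_subset_Icc_self.trans (Set.Icc_subset_Icc hε0.le le_rfl)))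
              hgint measurableSet_Ioc (fun t ht => ?_)
            have ht0 : (0:ℝ) < t := lt_trans hε0 ht.1
            have hdiv0 : 0 < ε / t := div_pos hε0 ht0
            have hdiv1 : ε / t ≤ 1 := (div_le_one ht0).2 ht.1.le
            have hbound := hIH (ε/t) hdiv0 hdiv1
            have heq := inner_eq hz d ε t ht0
            have hstep : t ^ z * (∫ y in Icc (0 : Fin d → ℝ) 1,
                (if (∏ ℓ, y ℓ) ≤ ε / t then (∏ ℓ, y ℓ) ^ z else 0))
                ≤ t ^ z * (C * (ε/t) ^ (z+1) * (1 + |Real.log (ε/t)|) ^ (d-1)) :=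
              mul_le_mul_of_nonneg_left hbound (Real.rpow_nonneg ht0.le z)
            refine le_trans (le_of_eq heq) (le_trans hstep (le_of_eq ?_))
            have habs : |Real.log (ε/t)| = Real.log t - Real.log ε := by
              rw [abs_of_nonpos (Real.log_nonpos hdiv0.le hdiv1),
                Real.log_div hε0.ne' ht0.ne']
              ring
            have hpow : t ^ z * (ε/t) ^ (z+1) = ε ^ (z+1) * t⁻¹ := by
              rw [Real.div_rpow hε0.le ht0.le, div_eq_mul_inv, ← Real.rpow_neg ht0.le,
                mul_comm (ε ^ (z+1)), ← mul_assoc, ← Real.rpow_add ht0]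
              rw [show z + -(z+1) = -1 by ring, Real.rpow_neg_one]
              ring
            rw [habs]
            calc t ^ z * (C * (ε/t) ^ (z+1) * (1 + (Real.log t - Real.log ε)) ^ (d-1))
                = C * (t ^ z * (ε/t) ^ (z+1)) * (1 + Real.log t - Real.log ε) ^ (d-1) := by
                  ring_nf
              _ = C * ε ^ (z+1) * (t⁻¹ * (1 + Real.log t - Real.log ε) ^ (d-1)) := by
                  rw [hpow]; ring
        _ = C * ε ^ (z+1) * ∫ t in Ioc ε 1,
              t⁻¹ * (1 + Real.log t - Real.log ε) ^ (d-1) := MeasureTheory.integral_const_mul _ _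
        _ ≤ C * ε ^ (z+1) * ((1 - Real.log ε) ^ d / d) := by
            refine mul_le_mul_of_nonneg_left (int_log_pow d hd hε0 hε1) ?_
            positivity
    have hεp : (0:ℝ) ≤ ε ^ (z+1) := Real.rpow_nonneg hε0.le _
    have habs2 : 1 - Real.log ε = 1 + |Real.log ε| := by
      rw [abs_of_nonpos (Real.log_nonpos hε0.le hε1)]; ring
    have ha1 : (1:ℝ) ≤ 1 + |Real.log ε| := le_add_of_nonneg_right (abs_nonneg _)
    have had : (1:ℝ) ≤ (1 + |Real.log ε|) ^ d := one_le_pow₀ ha1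
    have hsub : d + 1 - 1 = d := by omega
    rw [hsplit, hsub]
    rw [habs2] at piece2
    have key1 : ε ^ (z+1) / (z+1) ≤ (z+1)⁻¹ * (ε ^ (z+1) * (1 + |Real.log ε|) ^ d) := by
      rw [div_eq_inv_mul]
      exact mul_le_mul_of_nonneg_left (le_mul_of_one_le_right hεp had) (by positivity)
    have key2 : C * ε ^ (z+1) * ((1 + |Real.log ε|) ^ d / d)
        = C/d * (ε ^ (z+1) * (1 + |Real.log ε|) ^ d) := by ring
    have expand : ((z+1)⁻¹ + C/d) * ε ^ (z+1) * (1 + |Real.log ε|) ^ d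
        = (z+1)⁻¹ * (ε ^ (z+1) * (1 + |Real.log ε|) ^ d)
          + C/d * (ε ^ (z+1) * (1 + |Real.log ε|) ^ d) := by ring
    linarith
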